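/- Let G be a finite simple graph on a finite vertex type V with a weight function w : V → ℝ such that w v > 0 for all v, and let v be a conflict-ridden vertex, i.e., Score_max(v) < ∑_{u ∈ V} w u / (deg(u) + 1). Then removing v does not change the optimum: the maximum of Score(S) over all independent sets S of G equals the maximum of Score(S) over all independent sets S of G with v ∉ S. (Hence conflict-ridden candidates can be pruned from the Sharon graph without sacrificing the optimality of the resulting sharing plan.) -/

import Mathlib

/-!
Weighted Caro–Wei: greedily taking a vertex `u` that maximises `w u / (deg u + 1)` and deleting
its closed neighbourhood, whose summands add up to at most `w u`, produces an independent set `T`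
with `∑ u, w u / (deg u + 1) ≤ Score w T`. An independent set through `v` lies outside the
neighbourhood of `v`, so it scores at most `ScoreMax G w v < Score w T`. Hence `T` avoids `v`,
and every independent set through `v` is beaten by one avoiding `v`.
-/

/-- A sharing plan (finset of vertices) is valid iff it is an independent set of `G`. -/
def IsIndep {V : Type*} (G : SimpleGraph V) (P : Finset V) : Prop :=
  ∀ u ∈ P, ∀ v ∈ P, u ≠ v → ¬ G.Adj u v

/-- The score of a sharing plan. -/
def Score {V : Type*} (w : V → ℝ) (P : Finset V) : ℝ := ∑ v ∈ P, w v

/-- `Score_max v`: the sum of the weights of all vertices that are not neighbors of `v`. -/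
def ScoreMax {V : Type*} [Fintype V] [DecidableEq V] (G : SimpleGraph V)
    [DecidableRel G.Adj] (w : V → ℝ) (v : V) : ℝ :=
  ∑ u ∈ Finset.univ \ G.neighborFinset v, w u

section

open Finset

variable {V : Type*} {G : SimpleGraph V}

lemma IsIndep.insert [DecidableEq V] {u : V} {T : Finset V} (hT : IsIndep G T)
    (hu : ∀ z ∈ T, ¬ G.Adj u z) : IsIndep G (insert u T) := by
  intro x hx y hy hxy
  rcases mem_insert.1 hx with rfl | hxT <;> rcases mem_insert.1 hy with rfl | hyT
  · exact absurd rfl hxy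
  · exact hu y hyT
  · exact fun h => hu x hxT h.symm
  · exact hT x hxT y hyT hxy

lemma IsIndep.score_le_scoreMax [Fintype V] [DecidableEq V] [DecidableRel G.Adj] {w : V → ℝ}
    (hw : ∀ u, 0 ≤ w u) {S : Finset V} (hS : IsIndep G S) {v : V} (hv : v ∈ S) :
    Score w S ≤ ScoreMax G w v := by
  refine sum_le_sum_of_subset_of_nonneg (fun x hx => ?_) fun x _ _ => hw x
  rw [mem_sdiff, SimpleGraph.mem_neighborFinset]
  refine ⟨mem_univ x, fun hvx => ?_⟩
  exact hS v hv x hx hvx.ne hvx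

section CaroWei

variable [DecidableRel G.Adj] (w : V → ℝ)

noncomputable def caroWeiBound (A : Finset V) : ℝ :=
  ∑ x ∈ A, w x / (#{y ∈ A | G.Adj x y} + 1)

lemma caroWeiBound_univ [Fintype V] :
    caroWeiBound (G := G) w univ = ∑ u : V, w u / (G.degree u + 1) := by
  simp only [caroWeiBound, ← SimpleGraph.card_neighborFinset_eq_degree,
    SimpleGraph.neighborFinset_eq_filter]

lemma sum_le_caroWeiBound_of_subset (hw : ∀ u, 0 ≤ w u) {A B : Finset V} (hBA : B ⊆ A) :
    ∑ x ∈ B, w x / (#{y ∈ A | G.Adj x y} + 1 : ℝ) ≤ caroWeiBound (G := G) w B := by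
  refine sum_le_sum fun x _ => div_le_div_of_nonneg_left (hw x) (by positivity) ?_
  gcongr

variable [DecidableEq V]

lemma sum_closedNeighbor_le_of_isMaxOn {A : Finset V} {u : V} (huA : u ∈ A)
    (hu : ∀ x ∈ A, w x / (#{y ∈ A | G.Adj x y} + 1) ≤ w u / (#{y ∈ A | G.Adj u y} + 1)) :
    ∑ x ∈ insert u {y ∈ A | G.Adj u y}, w x / (#{y ∈ A | G.Adj x y} + 1 : ℝ) ≤ w u := by
  have hcard : (#(insert u {y ∈ A | G.Adj u y}) : ℝ) = #{y ∈ A | G.Adj u y} + 1 := by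
    rw [card_insert_of_notMem (by simp)]
    push_cast; ring
  have hCA : insert u {y ∈ A | G.Adj u y} ⊆ A := insert_subset huA (filter_subset _ _)
  calc _ ≤ #(insert u {y ∈ A | G.Adj u y}) • (w u / (#{y ∈ A | G.Adj u y} + 1)) :=
        sum_le_card_nsmul _ _ _ fun x hx => hu x (hCA hx)
    _ = w u := by
        rw [nsmul_eq_mul, hcard]
        field_simp

theorem exists_isIndep_caroWeiBound_le (hw : ∀ u, 0 ≤ w u) (A : Finset V) :
    ∃ T ⊆ A, IsIndep G T ∧ caroWeiBound (G := G) w A ≤ Score w T := by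
  induction A using Finset.strongInduction with
  | _ A ih =>
  rcases A.eq_empty_or_nonempty with rfl | hA
  · exact ⟨∅, subset_rfl, fun _ h => absurd h (notMem_empty _), by simp [caroWeiBound, Score]⟩
  obtain ⟨u, huA, hmax⟩ := A.exists_max_image (fun x => w x / (#{y ∈ A | G.Adj x y} + 1 : ℝ)) hA
  set C := insert u {y ∈ A | G.Adj u y}
  have hCA : C ⊆ A := insert_subset huA (filter_subset _ _)
  obtain ⟨T, hTB, hT, hTscore⟩ := ih (A \ C) (sdiff_ssubset hCA ⟨u, mem_insert_self u _⟩)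
  have hTC : ∀ z ∈ T, z ∉ C := fun z hz => (mem_sdiff.1 (hTB hz)).2
  refine ⟨insert u T, insert_subset huA (hTB.trans sdiff_subset), hT.insert fun z hz hu => ?_, ?_⟩
  · exact hTC z hz (mem_insert_of_mem (mem_filter.2 ⟨sdiff_subset (hTB hz), hu⟩))
  calc caroWeiBound w A
      = ∑ x ∈ A \ C, w x / (#{y ∈ A | G.Adj x y} + 1 : ℝ)
        + ∑ x ∈ C, w x / (#{y ∈ A | G.Adj x y} + 1 : ℝ) := (sum_sdiff hCA).symm
    _ ≤ caroWeiBound w (A \ C) + w u :=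
        add_le_add (sum_le_caroWeiBound_of_subset w hw sdiff_subset)
          (sum_closedNeighbor_le_of_isMaxOn w huA hmax)
    _ ≤ Score w T + w u := by gcongr
    _ = Score w (insert u T) := by
        rw [Score, Score, sum_insert fun h => hTC u h (mem_insert_self u _), add_comm]

end CaroWei

end

/-- Pruning a conflict-ridden candidate does not change the optimal score: the supremum
of scores over all independent sets equals the supremum over independent sets avoiding
`v`. -/
theorem stmt_13 {V : Type*} [Fintype V] [DecidableEq V] (G : SimpleGraph V)
    [DecidableRel G.Adj] (w : V → ℝ) (hw : ∀ v, 0 < w v) (v : V)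
    (hcr : ScoreMax G w v < ∑ u : V, w u / (G.degree u + 1)) :
    sSup {x : ℝ | ∃ S : Finset V, IsIndep G S ∧ Score w S = x} =
      sSup {x : ℝ | ∃ S : Finset V, IsIndep G S ∧ v ∉ S ∧ Score w S = x} := by
  have hw₀ : ∀ u, 0 ≤ w u := fun u => (hw u).le
  obtain ⟨T, -, hT, hTscore⟩ := exists_isIndep_caroWeiBound_le w hw₀ (G := G) Finset.univ
  rw [caroWeiBound_univ] at hTscore
  have hTbeats : ScoreMax G w v < Score w T := hcr.trans_le hTscore
  have hvT : v ∉ T := fun hv => (hT.score_le_scoreMax hw₀ hv).not_gt hTbeats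
  apply csSup_eq_csSup_of_forall_exists_le
  · rintro _ ⟨S, hS, rfl⟩
    by_cases hv : v ∈ S
    · exact ⟨_, ⟨T, hT, hvT, rfl⟩, (hS.score_le_scoreMax hw₀ hv).trans hTbeats.le⟩
    · exact ⟨_, ⟨S, hS, hv, rfl⟩, le_rfl⟩
  · rintro _ ⟨S, hS, -, rfl⟩
    exact ⟨_, ⟨S, hS, rfl⟩, le_rfl⟩
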